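/- Let S ⊆ ℝ be a set with 0 ∈ S and −S = S, and let g : S → S be an odd map (g(−x) = −g(x) for all x ∈ S) such that for every positive integer m the set {x ∈ S : g^m(x) = −x} is finite; let ψ(m) denote its cardinality. Then for every positive integer m, Φ₂(m, ψ) ≡ 0 (mod 2m), i.e., 2m divides Φ₂(m, ψ). -/

import Mathlib

/-!
Oddness of `g` makes the antiperiods of a point `x ≠ 0` (the `j` with `g^j x = -x`) exactly the
`j` with `n ∣ 2j` and `n ∤ j`, where `n` is the minimal period of `x`. So if `g^m x = -x` and
`2m = n q`, then `q` is odd and, for odd `d ∣ m`, `g^(m/d) x = -x` holds iff `d ∣ q`. Möbius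
inversion over the odd squarefree `d ∣ m` therefore counts the nonzero solutions of
`g^m x = -x` whose minimal period is exactly `2m`; the fixed point `0` accounts for the `-1` in
`Φ₂` when `m` is a power of `2`. These points form a `g`-invariant set all of whose orbits have
`2m` elements.
-/

open scoped Classical

/-- `Phi2 m ψ = ψ(m) - 1` if `m` is a power of 2, and otherwise
`∑_{d ∣ m, d odd and squarefree} μ(d) · ψ(m/d)`. -/
noncomputable def Phi2 (m : ℕ) (ψ : ℕ → ℤ) : ℤ :=
  if ∃ i : ℕ, m = 2 ^ i then ψ m - 1
  else ∑ d ∈ m.divisors.filter (fun d => Odd d ∧ Squarefree d),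
    (ArithmeticFunction.moebius d) * ψ (m / d)

open Finset Function ArithmeticFunction
open scoped ArithmeticFunction.Moebius

namespace Nat

theorem sum_moebius_squarefree_divisors (q : ℕ) :
    ∑ d ∈ q.divisors with Squarefree d, (μ d : ℤ) = if q = 1 then 1 else 0 := by
  rw [sum_filter_of_ne fun d _ h => moebius_ne_zero_iff_squarefree.mp h]
  simpa only [coe_mul_zeta_apply, one_apply] using
    congrArg (fun f : ArithmeticFunction ℤ => f q) moebius_mul_coe_zeta

theorem odd_of_two_mul_eq_mul_of_not_dvd {a n c : ℕ} (h : 2 * a = n * c) (ha : ¬n ∣ a) :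
    Odd c := by
  rcases Nat.even_or_odd c with ⟨e, rfl⟩ | hc
  · exact absurd ⟨e, by linarith⟩ ha
  · exact hc

theorem dvd_add_of_dvd_two_mul_of_not_dvd {n a b : ℕ} (ha : n ∣ 2 * a) (ha' : ¬n ∣ a)
    (hb : n ∣ 2 * b) (hb' : ¬n ∣ b) : n ∣ a + b := by
  obtain ⟨c, hc⟩ := ha
  obtain ⟨c', hc'⟩ := hb
  obtain ⟨w, hw⟩ := (odd_of_two_mul_eq_mul_of_not_dvd hc ha').add_odd
    (odd_of_two_mul_eq_mul_of_not_dvd hc' hb')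
  exact ⟨w, by linarith [congrArg (n * ·) hw]⟩

theorem dvd_two_mul_div_and_not_dvd_div_iff {m n q d : ℕ} (hn : n ≠ 0) (hmq : 2 * m = n * q)
    (hq : Odd q) (hdm : d ∣ m) (hd : Odd d) :
    (n ∣ 2 * (m / d) ∧ ¬n ∣ m / d) ↔ d ∣ q := by
  obtain ⟨k, rfl⟩ := hdm
  have hd0 : d ≠ 0 := by rintro rfl; simp at hd
  rw [Nat.mul_div_cancel_left k (Nat.pos_of_ne_zero hd0)]
  constructor
  · rintro ⟨⟨c, hc⟩, -⟩
    exact ⟨c, Nat.eq_of_mul_eq_mul_left (Nat.pos_of_ne_zero hn)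
      (by rw [← hmq, mul_left_comm, hc]; ring)⟩
  · rintro ⟨e, rfl⟩
    have hk : 2 * k = n * e := Nat.eq_of_mul_eq_mul_left (Nat.pos_of_ne_zero hd0) (by linarith)
    refine ⟨⟨e, hk⟩, fun ⟨f, hf⟩ => ?_⟩
    have : e = 2 * f := Nat.eq_of_mul_eq_mul_left (Nat.pos_of_ne_zero hn) (by rw [← hk, hf]; ring)
    exact Nat.not_even_iff_odd.mpr (Nat.odd_mul.mp hq).2 ⟨f, by omega⟩

theorem ordCompl_two_eq_one_iff {m : ℕ} : ordCompl[2] m = 1 ↔ ∃ i, m = 2 ^ i := by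
  refine ⟨fun h => ⟨m.factorization 2, ?_⟩, ?_⟩
  · simpa [h] using (Nat.ordProj_mul_ordCompl_eq_self m 2).symm
  · rintro ⟨i, rfl⟩
    exact Nat.ordCompl_self_pow Nat.prime_two

end Nat

def oddSquarefreeDivisors (m : ℕ) : Finset ℕ :=
  m.divisors.filter (fun d => Odd d ∧ Squarefree d)

theorem mem_oddSquarefreeDivisors {m d : ℕ} :
    d ∈ oddSquarefreeDivisors m ↔ (d ∣ m ∧ m ≠ 0) ∧ Odd d ∧ Squarefree d := by
  rw [oddSquarefreeDivisors, mem_filter, Nat.mem_divisors]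

theorem filter_dvd_oddSquarefreeDivisors {m q : ℕ} (hm : m ≠ 0) (hqm : q ∣ m) (hq : Odd q) :
    {d ∈ oddSquarefreeDivisors m | d ∣ q} = q.divisors.filter Squarefree := by
  ext d
  simp only [mem_filter, mem_oddSquarefreeDivisors, Nat.mem_divisors]
  constructor
  · rintro ⟨⟨-, -, hsq⟩, hdq⟩
    exact ⟨⟨hdq, hq.pos.ne'⟩, hsq⟩
  · rintro ⟨⟨hdq, -⟩, hsq⟩
    exact ⟨⟨⟨hdq.trans hqm, hm⟩, hq.of_dvd_nat hdq, hsq⟩, hdq⟩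

theorem oddSquarefreeDivisors_eq {m : ℕ} (hm : m ≠ 0) :
    oddSquarefreeDivisors m = (ordCompl[2] m).divisors.filter Squarefree := by
  have hodd : Odd (ordCompl[2] m) :=
    Nat.odd_iff.mpr (Nat.two_dvd_ne_zero.mp (Nat.not_dvd_ordCompl Nat.prime_two hm))
  rw [← filter_dvd_oddSquarefreeDivisors hm (Nat.ordCompl_dvd m 2) hodd, eq_comm,
    filter_true_of_mem]
  intro d hd
  rw [mem_oddSquarefreeDivisors] at hd
  exact Nat.dvd_ordCompl_of_dvd_not_dvd hd.1.1 hd.2.1.not_two_dvd_nat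

theorem sum_moebius_oddSquarefreeDivisors {m : ℕ} (hm : m ≠ 0) :
    ∑ d ∈ oddSquarefreeDivisors m, (μ d : ℤ) = if ∃ i, m = 2 ^ i then 1 else 0 := by
  rw [oddSquarefreeDivisors_eq hm, Nat.sum_moebius_squarefree_divisors]
  exact if_congr Nat.ordCompl_two_eq_one_iff rfl rfl

theorem Phi2_eq_sum_moebius_mul_sub_one {m : ℕ} (hm : m ≠ 0) (ψ : ℕ → ℤ) :
    Phi2 m ψ = ∑ d ∈ oddSquarefreeDivisors m, μ d * (ψ (m / d) - 1) := by
  simp only [mul_sub, mul_one, sum_sub_distrib, sum_moebius_oddSquarefreeDivisors hm, Phi2]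
  split_ifs with h
  · obtain ⟨i, rfl⟩ := h
    rw [oddSquarefreeDivisors_eq hm, Nat.ordCompl_self_pow Nat.prime_two, Nat.divisors_one,
      filter_singleton, if_pos squarefree_one]
    simp
  · simp [oddSquarefreeDivisors]

namespace Cycle

variable {α : Type*} [DecidableEq α]

theorem mem_toFinset {s : Cycle α} {a : α} : a ∈ s.toFinset ↔ a ∈ s :=
  Quotient.inductionOn' s fun _ => List.mem_toFinset

theorem Nodup.card_toFinset {s : Cycle α} (hs : s.Nodup) : #s.toFinset = s.length :=
  Quotient.inductionOn' s (fun _ hl => List.toFinset_card_of_nodup hl) hs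

end Cycle

namespace Function

variable {α : Type*} {f : α → α}

/-- A finite invariant set all of whose points have minimal period `n` is a union of orbits of
size `n`. -/
theorem dvd_card_of_mapsTo_of_minimalPeriod_eq {s : Finset α} {n : ℕ} (hn : 0 < n)
    (hs : Set.MapsTo f s s) (hper : ∀ x ∈ s, minimalPeriod f x = n) : n ∣ #s := by
  have hperiodic : ∀ x ∈ s, x ∈ periodicPts f := fun x hx =>
    minimalPeriod_pos_iff_mem_periodicPts.mp (hper x hx ▸ hn)
  rw [card_eq_sum_card_image (periodicOrbit f) s]
  refine dvd_sum fun c hc => ?_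
  obtain ⟨x, hx, rfl⟩ := mem_image.mp hc
  have hfiber : {y ∈ s | periodicOrbit f y = periodicOrbit f x} =
      (periodicOrbit f x).toFinset := by
    ext y
    simp only [mem_filter, Cycle.mem_toFinset]
    constructor
    · rintro ⟨hy, hyx⟩
      exact hyx ▸ self_mem_periodicOrbit (hperiodic y hy)
    · intro hy
      obtain ⟨k, rfl⟩ := (mem_periodicOrbit_iff (hperiodic x hx)).mp hy
      exact ⟨hs.iterate k hx, periodicOrbit_apply_iterate_eq (hperiodic x hx) k⟩
  rw [hfiber, nodup_periodicOrbit.card_toFinset, periodicOrbit_length, hper x hx]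

theorem iterate_neg_of_mapsTo [Neg α] {S : Set α} (hS : Set.MapsTo f S S)
    (hodd : ∀ x ∈ S, f (-x) = -f x) (k : ℕ) {x : α} (hx : x ∈ S) :
    f^[k] (-x) = -f^[k] x := by
  induction k generalizing x with
  | zero => rfl
  | succ k ih => rw [iterate_succ_apply, iterate_succ_apply, hodd x hx, ih (hS hx)]

section Antiperiodic

variable [InvolutiveNeg α] {x : α}

theorem isPeriodicPt_two_mul_of_iterate_eq_neg {k : ℕ} (hodd : f^[k] (-x) = -f^[k] x)
    (hk : f^[k] x = -x) : IsPeriodicPt f (2 * k) x := by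
  rw [IsPeriodicPt, IsFixedPt, two_mul, iterate_add_apply, hk, hodd, hk, neg_neg]

theorem not_minimalPeriod_dvd_of_iterate_eq_neg (hx : -x ≠ x) {k : ℕ} (hk : f^[k] x = -x) :
    ¬minimalPeriod f x ∣ k := fun h =>
  hx (hk ▸ (isPeriodicPt_iff_minimalPeriod_dvd.mpr h).eq)

variable (hodd : ∀ k, f^[k] (-x) = -f^[k] x)
include hodd

theorem iterate_mul_eq_neg_of_odd {k c : ℕ} (hk : f^[k] x = -x) (hc : Odd c) :
    f^[k * c] x = -x := by
  obtain ⟨i, rfl⟩ := hc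
  have hper := (isPeriodicPt_two_mul_of_iterate_eq_neg (hodd k) hk).mul_const i
  rw [show k * (2 * i + 1) = k + 2 * k * i by ring, iterate_add_apply, hper.eq, hk]

/-- Two antiperiods add up to a period. -/
theorem iterate_eq_neg_iff (hx : -x ≠ x) {m : ℕ} (hm : f^[m] x = -x) (j : ℕ) :
    f^[j] x = -x ↔ minimalPeriod f x ∣ 2 * j ∧ ¬minimalPeriod f x ∣ j := by
  refine ⟨fun hj => ⟨(isPeriodicPt_two_mul_of_iterate_eq_neg (hodd j) hj).minimalPeriod_dvd,
    not_minimalPeriod_dvd_of_iterate_eq_neg hx hj⟩, fun ⟨h2j, hj⟩ => ?_⟩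
  have hper : IsPeriodicPt f (j + m) x := isPeriodicPt_iff_minimalPeriod_dvd.mpr <|
    Nat.dvd_add_of_dvd_two_mul_of_not_dvd h2j hj
      (isPeriodicPt_two_mul_of_iterate_eq_neg (hodd m) hm).minimalPeriod_dvd
      (not_minimalPeriod_dvd_of_iterate_eq_neg hx hm)
  have := hper.eq
  rw [iterate_add_apply, hm, hodd] at this
  exact neg_eq_iff_eq_neg.mp this

theorem sum_moebius_ite_iterate_div_eq_neg (hx : -x ≠ x) {m : ℕ} (hm0 : m ≠ 0)
    (hm : f^[m] x = -x) :
    ∑ d ∈ oddSquarefreeDivisors m, (if f^[m / d] x = -x then (μ d : ℤ) else 0) =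
      if minimalPeriod f x = 2 * m then 1 else 0 := by
  obtain ⟨⟨q, hq⟩, hm'⟩ := (iterate_eq_neg_iff hodd hx hm m).mp hm
  have hn : minimalPeriod f x ≠ 0 := fun h => hm0 (by rw [h, zero_mul] at hq; omega)
  have hqodd : Odd q := Nat.odd_of_two_mul_eq_mul_of_not_dvd hq hm'
  have hqm : q ∣ m := hqodd.coprime_two_right.dvd_of_dvd_mul_left ⟨minimalPeriod f x, by
    rw [hq, mul_comm]⟩
  rw [← sum_filter, filter_congr fun d hd => (iterate_eq_neg_iff hodd hx hm _).trans <|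
      Nat.dvd_two_mul_div_and_not_dvd_div_iff hn hq hqodd
        (mem_oddSquarefreeDivisors.mp hd).1.1 (mem_oddSquarefreeDivisors.mp hd).2.1,
    filter_dvd_oddSquarefreeDivisors hm0 hqm hqodd, Nat.sum_moebius_squarefree_divisors]
  refine if_congr ⟨fun h => by rw [hq, h, mul_one], fun h => ?_⟩ rfl rfl
  rw [h] at hq
  exact (Nat.mul_eq_left (by omega)).mp hq.symm

end Antiperiodic

theorem sum_moebius_mul_card_filter_iterate_div_eq_neg [InvolutiveNeg α] {T : Finset α} {m : ℕ}
    (hm : m ≠ 0)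
    (hT : ∀ x ∈ T, (∀ k, f^[k] (-x) = -f^[k] x) ∧ -x ≠ x ∧ f^[m] x = -x) :
    ∑ d ∈ oddSquarefreeDivisors m, μ d * #{x ∈ T | f^[m / d] x = -x} =
      #{x ∈ T | minimalPeriod f x = 2 * m} := by
  calc ∑ d ∈ oddSquarefreeDivisors m, μ d * #{x ∈ T | f^[m / d] x = -x}
      = ∑ x ∈ T, ∑ d ∈ oddSquarefreeDivisors m,
          if f^[m / d] x = -x then (μ d : ℤ) else 0 := by
        rw [sum_comm]
        simp [sum_ite, mul_comm]
    _ = ∑ x ∈ T, if minimalPeriod f x = 2 * m then 1 else 0 := sum_congr rfl fun x hx =>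
        sum_moebius_ite_iterate_div_eq_neg (hT x hx).1 (hT x hx).2.1 hm (hT x hx).2.2
    _ = _ := sum_boole _ _

theorem mapsTo_filter_minimalPeriod_eq [NegZeroClass α] {S : Set α} (hS : Set.MapsTo f S S)
    (hodd : ∀ x ∈ S, f (-x) = -f x) (hf0 : f 0 = 0) {T : Finset α} {m n : ℕ} (hn : 1 < n)
    (hT : ∀ x, x ∈ T ↔ x ∈ S ∧ x ≠ 0 ∧ f^[m] x = -x) :
    Set.MapsTo f ↑{x ∈ T | minimalPeriod f x = n} ↑{x ∈ T | minimalPeriod f x = n} := by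
  intro x hx
  simp only [coe_filter, Set.mem_ofPred_eq, hT] at hx ⊢
  obtain ⟨⟨hxS, -, hxm⟩, hper⟩ := hx
  have hper' : minimalPeriod f (f x) = n :=
    (minimalPeriod_apply (minimalPeriod_pos_iff_mem_periodicPts.mp (by omega))).trans hper
  refine ⟨⟨hS hxS, fun hfx => ?_, ?_⟩, hper'⟩
  · rw [hfx, minimalPeriod_eq_one_iff_isFixedPt.mpr hf0] at hper'
    omega
  · rw [← iterate_succ_apply, iterate_succ_apply', hxm, hodd x hxS]

theorem ncard_setOf_iterate_eq_neg [NegZeroClass α] {S : Set α} (h0 : 0 ∈ S) (hf0 : f 0 = 0)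
    {T : Finset α} {m k : ℕ} (hT : ∀ x, x ∈ T ↔ x ∈ S ∧ x ≠ 0 ∧ f^[m] x = -x)
    (hkm : ∀ x ∈ S, f^[k] x = -x → f^[m] x = -x) :
    {x | x ∈ S ∧ f^[k] x = -x}.ncard = #{x ∈ T | f^[k] x = -x} + 1 := by
  have hinsert : {x | x ∈ S ∧ f^[k] x = -x} = insert 0 ↑{x ∈ T | f^[k] x = -x} := by
    ext x
    by_cases hx : x = 0
    · simp [hx, h0, iterate_fixed hf0]
    · simp only [Set.mem_ofPred_eq, Set.mem_insert_iff, hx, false_or, coe_filter, hT]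
      exact ⟨fun ⟨hxS, hk⟩ => ⟨⟨hxS, hx, hkm x hxS hk⟩, hk⟩,
        fun ⟨⟨hxS, _⟩, hk⟩ => ⟨hxS, hk⟩⟩
  rw [hinsert, Set.ncard_insert_of_notMem (by simp [hT]), Set.ncard_coe_finset]

end Function

theorem statement3_general (S : Set ℝ) (h0 : (0 : ℝ) ∈ S)
    (g : ℝ → ℝ) (hmaps : ∀ x ∈ S, g x ∈ S)
    (hodd : ∀ x ∈ S, g (-x) = - g x)
    (hfin : ∀ m : ℕ, 0 < m → {x : ℝ | x ∈ S ∧ g^[m] x = -x}.Finite)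
    (ψ : ℕ → ℤ)
    (hψ : ∀ m : ℕ, 0 < m → ψ m = ({x : ℝ | x ∈ S ∧ g^[m] x = -x}.ncard : ℤ))
    (m : ℕ) (hm : 0 < m) :
    (2 * m : ℤ) ∣ Phi2 m ψ := by
  have hg0 : g 0 = 0 := self_eq_neg.mp (by simpa using hodd 0 h0)
  have hodd_iter : ∀ x ∈ S, ∀ k, g^[k] (-x) = -g^[k] x := fun x hx k =>
    iterate_neg_of_mapsTo hmaps hodd k hx
  obtain ⟨T, hT⟩ : ∃ T : Finset ℝ, ∀ x, x ∈ T ↔ x ∈ S ∧ x ≠ 0 ∧ g^[m] x = -x :=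
    ⟨((hfin m hm).subset fun x hx => ⟨hx.1, hx.2.2⟩).toFinset,
      fun x => Set.Finite.mem_toFinset _⟩
  have hψT : ∀ d ∈ oddSquarefreeDivisors m,
      ψ (m / d) - 1 = #{x ∈ T | g^[m / d] x = -x} := by
    intro d hd
    obtain ⟨⟨hdm, -⟩, hdodd, -⟩ := mem_oddSquarefreeDivisors.mp hd
    have hkm : ∀ x ∈ S, g^[m / d] x = -x → g^[m] x = -x := fun x hx h => by
      simpa [Nat.div_mul_cancel hdm] using iterate_mul_eq_neg_of_odd (hodd_iter x hx) h hdodd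
    rw [hψ _ (Nat.div_pos (Nat.le_of_dvd hm hdm) hdodd.pos),
      ncard_setOf_iterate_eq_neg h0 hg0 hT hkm]
    push_cast
    ring
  have hcount : Phi2 m ψ = #{x ∈ T | minimalPeriod g x = 2 * m} := by
    rw [Phi2_eq_sum_moebius_mul_sub_one hm.ne' ψ, sum_congr rfl fun d hd => by rw [hψT d hd]]
    refine sum_moebius_mul_card_filter_iterate_div_eq_neg hm.ne' fun x hx => ?_
    obtain ⟨hxS, hx0, hxm⟩ := (hT x).mp hx
    exact ⟨hodd_iter x hxS, neg_ne_self.mpr hx0, hxm⟩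
  rw [hcount]
  exact_mod_cast dvd_card_of_mapsTo_of_minimalPeriod_eq (by omega)
    (mapsTo_filter_minimalPeriod_eq hmaps hodd hg0 (by omega) hT)
    fun x hx => (mem_filter.mp hx).2

/-- For an odd map `g` on a symmetric set `S ⊆ ℝ` containing `0`, if `ψ(m)` is the number
of solutions of `g^m(x) = -x` in `S`, then `Φ₂(m, ψ) ≡ 0 (mod 2m)`. -/
theorem statement3 (S : Set ℝ) (h0 : (0 : ℝ) ∈ S)
    (hS : ∀ x : ℝ, x ∈ S ↔ -x ∈ S)
    (g : ℝ → ℝ) (hmaps : ∀ x ∈ S, g x ∈ S)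
    (hodd : ∀ x ∈ S, g (-x) = - g x)
    (hfin : ∀ m : ℕ, 0 < m → {x : ℝ | x ∈ S ∧ g^[m] x = -x}.Finite)
    (ψ : ℕ → ℤ)
    (hψ : ∀ m : ℕ, 0 < m → ψ m = ({x : ℝ | x ∈ S ∧ g^[m] x = -x}.ncard : ℤ))
    (m : ℕ) (hm : 0 < m) :
    (2 * m : ℤ) ∣ Phi2 m ψ :=
  statement3_general S h0 g hmaps hodd hfin ψ hψ m hm
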